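/- Converse for the pinching-antenna channel: let G_k := sup_{v̄ ∈ V} |γ(v̄; w_k)|² (finite since d > 0). Then for every feasible transmission strategy (v,p), the average sum rate satisfies R̄(v,p) ≤ log₂(1 + P·(Σ_{k=1}^K G_k)/(N σ²)). -/

import Mathlib

/-!
Every antenna hangs at height `d` above the users, so `|γ(v̄; w_k)| ≤ N √η / d` and the gains
`G_k` are finite. At each instant the rate is therefore at most
`log₂ (1 + Σ_k p_k(t) G_k / (N σ²))`. Since `log` lies below its tangent line at
`c = P Σ_k G_k / (N σ²)`, the time average of this is at most `log₂ (1 + c)` plus a multiple of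
the average excess of `Σ_k p_k G_k / (N σ²)` over `c`, and the power budget makes that excess
nonpositive.
-/

open MeasureTheory

noncomputable section

/-- Euclidean distance between two points of ℝ³ (represented as `ℝ × ℝ × ℝ`). -/
def dist3 (a b : ℝ × ℝ × ℝ) : ℝ :=
  Real.sqrt ((a.1 - b.1) ^ 2 + (a.2.1 - b.2.1) ^ 2 + (a.2.2 - b.2.2) ^ 2)

/-- Feasible set of antenna x-coordinates: `0 ≤ v 0`, successive gaps at least `Δ`,
and `v (N-1) ≤ Lmax`. -/
def Vfeas (N : ℕ) (Δ Lmax : ℝ) : Set (Fin N → ℝ) :=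
  {v | (∀ i : Fin N, (i : ℕ) = 0 → 0 ≤ v i) ∧
       (∀ i j : Fin N, (j : ℕ) = (i : ℕ) + 1 → Δ ≤ v j - v i) ∧
       (∀ i : Fin N, (i : ℕ) = N - 1 → v i ≤ Lmax)}

/-- Effective channel coefficient `γ(v̄; w)` of the pinching-antenna system, with
`η = λ²/(16π²)`, antenna `n` at `(v n, 0, d)` and feed point at `(-Dx/2, 0, d)`. -/
def gamma (N : ℕ) (lam lamg d Dx : ℝ) (v : Fin N → ℝ) (w : ℝ × ℝ × ℝ) : ℂ :=
  ∑ n : Fin N,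
    Complex.exp (-(Complex.I) * ((2 * Real.pi / lamg * dist3 (v n, 0, d) (-Dx / 2, 0, d) : ℝ) : ℂ)) *
      (((Real.sqrt (lam ^ 2 / (16 * Real.pi ^ 2)) : ℝ) : ℂ) *
        Complex.exp (-(Complex.I) * ((2 * Real.pi / lam * dist3 (v n, 0, d) w : ℝ) : ℂ)) /
        ((dist3 (v n, 0, d) w : ℝ) : ℂ))

/-- Channel power gain `|γ(v̄; w)|²`. -/
def gain (N : ℕ) (lam lamg d Dx : ℝ) (v : Fin N → ℝ) (w : ℝ × ℝ × ℝ) : ℝ :=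
  ‖gamma N lam lamg d Dx v w‖ ^ 2

/-- A feasible transmission strategy: measurable antenna trajectory taking values in the
feasible set, measurable nonnegative powers with per-user average power budget `P`. -/
def Feasible (N K : ℕ) (Δ Lmax T P : ℝ)
    (v : ℝ → Fin N → ℝ) (p : ℝ → Fin K → ℝ) : Prop :=
  Measurable v ∧ Measurable p ∧
  (∀ t ∈ Set.Ioc (0 : ℝ) T, v t ∈ Vfeas N Δ Lmax) ∧
  (∀ t ∈ Set.Ioc (0 : ℝ) T, ∀ k, 0 ≤ p t k) ∧
  (∀ k, ∫⁻ t in Set.Ioc (0 : ℝ) T, ENNReal.ofReal (p t k) ≤ ENNReal.ofReal (T * P))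

/-- Average sum rate of a transmission strategy over the period `(0, T]`. -/
def avgRate (N K : ℕ) (lam lamg d Dx σ2 T : ℝ) (w : Fin K → ℝ × ℝ × ℝ)
    (v : ℝ → Fin N → ℝ) (p : ℝ → Fin K → ℝ) : ℝ :=
  (1 / T) * ∫ t in Set.Ioc (0 : ℝ) T,
    Real.logb 2 (1 + (∑ k, p t k * gain N lam lamg d Dx (v t) (w k)) / (N * σ2))

end

open Set Real

lemma Real.log_le_log_add_sub_div {a x : ℝ} (ha : 0 < a) (hx : 0 < x) :
    log x ≤ log a + (x - a) / a := by
  have h := log_le_sub_one_of_pos (div_pos hx ha)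
  rw [log_div hx.ne' ha.ne'] at h
  have : x / a - 1 = (x - a) / a := by field_simp
  linarith

theorem integral_logb_one_add_le {α : Type*} [MeasurableSpace α] {μ : Measure α}
    [IsFiniteMeasure μ] {b c : ℝ} {f g : α → ℝ} (hb : 1 ≤ b) (hc : -1 < c)
    (hf : ∀ᵐ a ∂μ, 0 ≤ f a) (hfg : f ≤ᵐ[μ] g) (hg : Integrable g μ)
    (hgc : ∫ a, g a ∂μ ≤ μ.real univ * c) :
    ∫ a, logb b (1 + f a) ∂μ ≤ μ.real univ * logb b (1 + c) := by
  have hc1 : 0 < 1 + c := by linarith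
  have htangent : ∀ᵐ a ∂μ, log (1 + f a) ≤ log (1 + c) + (g a - c) / (1 + c) := by
    filter_upwards [hf, hfg] with a hfa hfga
    calc log (1 + f a) ≤ log (1 + c) + (1 + f a - (1 + c)) / (1 + c) :=
          log_le_log_add_sub_div hc1 (by linarith)
      _ ≤ log (1 + c) + (g a - c) / (1 + c) := by
          gcongr log (1 + c) + ?_ / (1 + c); linarith
  have hslope : Integrable (fun a => (g a - c) / (1 + c)) μ :=
    (hg.sub (integrable_const c)).div_const _
  have hmajorant : Integrable (fun a => log (1 + c) + (g a - c) / (1 + c)) μ :=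
    (integrable_const _).add hslope
  have hlog : ∫ a, log (1 + f a) ∂μ ≤ μ.real univ * log (1 + c) :=
    calc ∫ a, log (1 + f a) ∂μ
        ≤ ∫ a, (log (1 + c) + (g a - c) / (1 + c)) ∂μ := by
          refine integral_mono_of_nonneg ?_ hmajorant htangent
          filter_upwards [hf] with a hfa using log_nonneg (by linarith [hfa])
      _ = μ.real univ * log (1 + c) + (∫ a, g a ∂μ - μ.real univ * c) / (1 + c) := by
          rw [integral_add (integrable_const _) hslope,
            integral_div, integral_sub hg (integrable_const c), integral_const, integral_const,
            smul_eq_mul, smul_eq_mul]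
      _ ≤ μ.real univ * log (1 + c) := by
          have : (∫ a, g a ∂μ - μ.real univ * c) / (1 + c) ≤ 0 :=
            div_nonpos_of_nonpos_of_nonneg (by linarith) hc1.le
          linarith
  simp only [logb, integral_div, ← mul_div_assoc]
  exact div_le_div_of_nonneg_right hlog (log_nonneg hb)

lemma abs_sub_le_dist3 (a b : ℝ × ℝ × ℝ) : |a.2.2 - b.2.2| ≤ dist3 a b := by
  rw [← sqrt_sq_eq_abs]
  exact sqrt_le_sqrt (by nlinarith [sq_nonneg (a.1 - b.1), sq_nonneg (a.2.1 - b.2.1)])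

section Channel

variable {N : ℕ} {lam lamg d Dx : ℝ} {w : ℝ × ℝ × ℝ}

lemma norm_gamma_le (hd : 0 < d) (hw : w.2.2 = 0) (vb : Fin N → ℝ) :
    ‖gamma N lam lamg d Dx vb w‖ ≤ N * (sqrt (lam ^ 2 / (16 * π ^ 2)) / d) := by
  have hphase : ∀ r : ℝ, ‖Complex.exp (-Complex.I * r)‖ = 1 := fun r => by
    rw [Complex.norm_exp]; simp
  refine (norm_sum_le _ _).trans ?_
  refine (Finset.sum_le_card_nsmul _ _ (sqrt (lam ^ 2 / (16 * π ^ 2)) / d) fun n _ => ?_).trans_eq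
    (by simp)
  have hdist : d ≤ dist3 (vb n, 0, d) w := by
    simpa [hw, abs_of_pos hd] using abs_sub_le_dist3 (vb n, 0, d) w
  rw [norm_mul, norm_div, norm_mul, hphase, hphase, Complex.norm_real, Complex.norm_real,
    norm_of_nonneg (sqrt_nonneg _), norm_of_nonneg (hd.le.trans hdist), one_mul, mul_one]
  gcongr

lemma gain_le_sSup (hd : 0 < d) (hw : w.2.2 = 0) {s : Set (Fin N → ℝ)} {vb : Fin N → ℝ}
    (hvb : vb ∈ s) : gain N lam lamg d Dx vb w ≤ sSup ((gain N lam lamg d Dx · w) '' s) := by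
  refine le_csSup ⟨(N * (sqrt (lam ^ 2 / (16 * π ^ 2)) / d)) ^ 2, ?_⟩ (mem_image_of_mem _ hvb)
  rintro _ ⟨u, -, rfl⟩
  exact pow_le_pow_left₀ (norm_nonneg _) (norm_gamma_le hd hw u) 2

lemma sSup_gain_nonneg (s : Set (Fin N → ℝ)) :
    0 ≤ sSup ((gain N lam lamg d Dx · w) '' s) :=
  Real.sSup_nonneg <| by rintro _ ⟨u, -, rfl⟩; exact sq_nonneg _

end Channel

namespace Feasible

variable {N K : ℕ} {Δ Lmax T P : ℝ} {v : ℝ → Fin N → ℝ} {p : ℝ → Fin K → ℝ}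

lemma integrableOn_power (h : Feasible N K Δ Lmax T P v p) (k : Fin K) :
    IntegrableOn (fun t => p t k) (Ioc 0 T) := by
  obtain ⟨-, hp, -, hp0, hbudget⟩ := h
  refine ⟨((measurable_pi_apply k).comp hp).aestronglyMeasurable, ?_⟩
  rw [hasFiniteIntegral_iff_ofReal (ae_restrict_of_forall_mem measurableSet_Ioc (hp0 · · k))]
  exact (hbudget k).trans_lt ENNReal.ofReal_lt_top

lemma integral_power_le (h : Feasible N K Δ Lmax T P v p) (hTP : 0 ≤ T * P) (k : Fin K) :
    ∫ t in Ioc 0 T, p t k ≤ T * P := by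
  rw [integral_eq_lintegral_of_nonneg_ae
    (ae_restrict_of_forall_mem measurableSet_Ioc (h.2.2.2.1 · · k))
    (h.integrableOn_power k).aestronglyMeasurable, ← ENNReal.toReal_ofReal hTP]
  exact ENNReal.toReal_mono ENNReal.ofReal_ne_top (h.2.2.2.2 k)

lemma integral_weighted_power_le (h : Feasible N K Δ Lmax T P v p) (hTP : 0 ≤ T * P)
    {G : Fin K → ℝ} (hG : ∀ k, 0 ≤ G k) :
    ∫ t in Ioc 0 T, ∑ k, p t k * G k ≤ T * P * ∑ k, G k := by
  rw [integral_finsetSum _ fun k _ => (h.integrableOn_power k).mul_const (G k),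
    Finset.mul_sum]
  exact Finset.sum_le_sum fun k _ => by
    rw [integral_mul_const]; exact mul_le_mul_of_nonneg_right (h.integral_power_le hTP k) (hG k)

end Feasible

theorem converse_pinching_MAC_general
    (N K : ℕ)
    (lam lamg d Dx Δ Lmax T P σ2 : ℝ)
    (hd : 0 < d)
    (hT : 0 < T) (hP : 0 < P) (hσ : 0 < σ2)
    (w : Fin K → ℝ × ℝ × ℝ) (hw : ∀ k, (w k).2.2 = 0)
    (G : Fin K → ℝ)
    (hG : ∀ k, G k = sSup ((fun vb => gain N lam lamg d Dx vb (w k)) '' Vfeas N Δ Lmax))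
    (v : ℝ → Fin N → ℝ) (p : ℝ → Fin K → ℝ)
    (hfeas : Feasible N K Δ Lmax T P v p) :
    avgRate N K lam lamg d Dx σ2 T w v p
      ≤ Real.logb 2 (1 + P * (∑ k, G k) / (N * σ2)) := by
  have hμ : (volume.restrict (Ioc (0 : ℝ) T)).real univ = T := by
    rw [measureReal_restrict_apply_univ, volume_real_Ioc_of_le hT.le, sub_zero]
  have ⟨_, _, hv, hp0, _⟩ := hfeas
  have hG0 : ∀ k, 0 ≤ G k := fun k => hG k ▸ sSup_gain_nonneg _
  have hNσ : 0 ≤ (N : ℝ) * σ2 := by positivity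
  have hc : 0 ≤ P * (∑ k, G k) / (N * σ2) :=
    div_nonneg (mul_nonneg hP.le (Finset.sum_nonneg fun k _ => hG0 k)) hNσ
  have hrate0 :
      ∀ t ∈ Ioc 0 T, 0 ≤ (∑ k, p t k * gain N lam lamg d Dx (v t) (w k)) / (N * σ2) :=
    fun t ht => div_nonneg (Finset.sum_nonneg fun k _ => mul_nonneg (hp0 t ht k) (sq_nonneg _)) hNσ
  have hrate_le : ∀ t ∈ Ioc 0 T, (∑ k, p t k * gain N lam lamg d Dx (v t) (w k)) / (N * σ2)
      ≤ (∑ k, p t k * G k) / (N * σ2) := fun t ht => by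
    gcongr with k
    · exact hp0 t ht k
    · exact hG k ▸ gain_le_sSup hd (hw k) (hv t ht)
  have hmajorant :
      ∫ t in Ioc 0 T, (∑ k, p t k * G k) / (N * σ2)
        ≤ T * (P * (∑ k, G k) / (N * σ2)) := by
    rw [integral_div, mul_div_assoc', ← mul_assoc]
    exact div_le_div_of_nonneg_right (hfeas.integral_weighted_power_le (by positivity) hG0) hNσ
  have hjensen := integral_logb_one_add_le one_le_two (neg_one_lt_zero.trans_le hc)
    (ae_restrict_of_forall_mem measurableSet_Ioc hrate0)
    (ae_restrict_of_forall_mem measurableSet_Ioc hrate_le)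
    ((integrable_finsetSum _ fun k _ => (hfeas.integrableOn_power k).mul_const (G k)).div_const _)
    (by rwa [hμ])
  rw [hμ] at hjensen
  rwa [avgRate, one_div, inv_mul_le_iff₀ hT]

/-- converse for the pinching-antenna channel.
With `G k` the supremum of the channel power gain of user `k` over the feasible set,
every feasible transmission strategy has average sum rate at most
`log₂(1 + P (∑ k, G k) / (N σ²))`. -/
theorem converse_pinching_MAC
    (N K : ℕ) (hN : 1 ≤ N) (hK : 1 ≤ K)
    (lam lamg d Dx Δ Lmax T P σ2 : ℝ)
    (hlam : 0 < lam) (hlamg : 0 < lamg) (hd : 0 < d) (hΔ : 0 < Δ)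
    (hLmax : 0 < Lmax) (hNL : ((N : ℝ) - 1) * Δ ≤ Lmax)
    (hT : 0 < T) (hP : 0 < P) (hσ : 0 < σ2)
    (w : Fin K → ℝ × ℝ × ℝ) (hw : ∀ k, (w k).2.2 = 0)
    (G : Fin K → ℝ)
    (hG : ∀ k, G k = sSup ((fun vb => gain N lam lamg d Dx vb (w k)) '' Vfeas N Δ Lmax))
    (v : ℝ → Fin N → ℝ) (p : ℝ → Fin K → ℝ)
    (hfeas : Feasible N K Δ Lmax T P v p) :
    avgRate N K lam lamg d Dx σ2 T w v p
      ≤ Real.logb 2 (1 + P * (∑ k, G k) / (N * σ2)) :=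
  converse_pinching_MAC_general N K lam lamg d Dx Δ Lmax T P σ2 hd hT hP hσ w hw G hG v p hfeas
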